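/- arXiv:1607.00132 — 4 statements merged into one kernel-verified Lean document; each statement's English description precedes it below -/
import Mathlib

section
/- Let u, v, z lie on a semicircle Q bounding a lune L of S^2 of thickness at most π/2, with v on the arc uz. Then for every q in L, |qv| ≤ max{|qu|, |qz|}. -/
noncomputable section

/-- Euclidean space ℝⁿ. -/
abbrev Esp (n : ℕ) := EuclideanSpace ℝ (Fin n)

/-- The unit sphere in ℝⁿ. -/
def uSphere (n : ℕ) : Set (Esp n) := {x | ‖x‖ = 1}

/-- Geodesic (angular) distance between unit vectors. -/
def sdist {n : ℕ} (a b : Esp n) : ℝ := Real.arccos (inner ℝ a b : ℝ)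

/-- Closed hemisphere with center `m`. -/
def Hemi {n : ℕ} (m : Esp n) : Set (Esp n) := {x ∈ uSphere n | 0 ≤ (inner ℝ m x : ℝ)}

/-- The great sphere (great circle for n = 3) bounding the hemisphere centered at `m`. -/
def gSphere {n : ℕ} (m : Esp n) : Set (Esp n) := {x ∈ uSphere n | (inner ℝ m x : ℝ) = 0}

/-- The shorter great-circle arc between `a` and `b`: points through which a
minimizing geodesic from `a` to `b` passes. -/
def Arc {n : ℕ} (a b : Esp n) : Set (Esp n) :=
  {x ∈ uSphere n | sdist a x + sdist x b = sdist a b}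

/-- Spherically convex set: contained in the sphere, no antipodal pairs, and
closed under taking shorter arcs. -/
def SphConvex {n : ℕ} (C : Set (Esp n)) : Prop :=
  C ⊆ uSphere n ∧ (∀ x ∈ C, -x ∉ C) ∧ ∀ a ∈ C, ∀ b ∈ C, Arc a b ⊆ C

/-- Interior of a subset of the sphere relative to the sphere. -/
def sphInterior {n : ℕ} (C : Set (Esp n)) : Set (Esp n) :=
  {x ∈ uSphere n | ∃ ε > 0, ∀ y ∈ uSphere n, dist y x < ε → y ∈ C}

/-- Spherical convex body: closed, spherically convex, with nonempty interior
relative to the sphere. -/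
def SphBody {n : ℕ} (C : Set (Esp n)) : Prop :=
  SphConvex C ∧ IsClosed C ∧ (sphInterior C).Nonempty

/-- Boundary of a closed subset of the sphere relative to the sphere. -/
def sphBoundary {n : ℕ} (C : Set (Esp n)) : Set (Esp n) := C \ sphInterior C

/-- `g`, `h` are centers of two distinct non-opposite hemispheres. -/
def IsLune {n : ℕ} (g h : Esp n) : Prop :=
  g ∈ uSphere n ∧ h ∈ uSphere n ∧ g ≠ h ∧ g ≠ -h

/-- The lune determined by hemisphere centers `g` and `h`. -/
def Lune {n : ℕ} (g h : Esp n) : Set (Esp n) := Hemi g ∩ Hemi h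

/-- The (d-1)-dimensional hemisphere `G/H` bounding the lune `G ∩ H`:
part of the great sphere of `G` lying in `H`.  (A semicircle when n = 3.) -/
def semic {n : ℕ} (g h : Esp n) : Set (Esp n) :=
  {x ∈ uSphere n | (inner ℝ g x : ℝ) = 0 ∧ 0 ≤ (inner ℝ h x : ℝ)}

/-- The center of the bounding hemisphere `G/H` of the lune `G ∩ H`:
the normalized projection of `h` onto the hyperplane orthogonal to `g`. -/
def scCenter {n : ℕ} (g h : Esp n) : Esp n :=
  ‖h - (inner ℝ g h : ℝ) • g‖⁻¹ • (h - (inner ℝ g h : ℝ) • g)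

/-- Thickness of a lune: distance between the centers of its two bounding
hemispheres. -/
def lthick {n : ℕ} (g h : Esp n) : ℝ := sdist (scCenter g h) (scCenter h g)

/-- Thickness of a convex body: minimal thickness of a lune containing it. -/
def thick {n : ℕ} (C : Set (Esp n)) : ℝ :=
  sInf {t | ∃ g h, IsLune g h ∧ C ⊆ Lune g h ∧ lthick g h = t}

/-- Reduced spherical body. -/
def Reduced {n : ℕ} (R : Set (Esp n)) : Prop :=
  SphBody R ∧ ∀ Z, SphBody Z → Z ⊆ R → Z ≠ R → thick Z < thick R

/-- Geodesic diameter of a set on the sphere. -/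
def sdiam {n : ℕ} (C : Set (Esp n)) : ℝ :=
  sSup {t | ∃ a ∈ C, ∃ b ∈ C, sdist a b = t}

/-- The hemisphere centered at `m` supports `C` at `p`. -/
def SupportsAt {n : ℕ} (C : Set (Esp n)) (m p : Esp n) : Prop :=
  m ∈ uSphere n ∧ C ⊆ Hemi m ∧ p ∈ C ∧ (inner ℝ m p : ℝ) = 0

/-- The hemisphere centered at `m` supports `C`. -/
def Supports {n : ℕ} (C : Set (Esp n)) (m : Esp n) : Prop := ∃ p, SupportsAt C m p

/-- The width of `C` determined by the supporting hemisphere centered at `m`: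
minimal thickness of a lune `M ∩ M*` over supporting hemispheres `M*` of `C`. -/
def sWidth {n : ℕ} (C : Set (Esp n)) (m : Esp n) : ℝ :=
  sInf {t | ∃ h, Supports C h ∧ IsLune m h ∧ C ⊆ Lune m h ∧ lthick m h = t}

/-- `C` is of constant width `w`. -/
def ConstWidth {n : ℕ} (C : Set (Esp n)) (w : ℝ) : Prop :=
  ∀ m, Supports C m → sWidth C m = w

/-- Extreme point of a spherically convex set. -/
def ExtremeP {n : ℕ} (C : Set (Esp n)) (e : Esp n) : Prop :=
  e ∈ C ∧ ∀ a ∈ C, ∀ b ∈ C, e ∈ Arc a b → e = a ∨ e = b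

/-- `p` is a smooth boundary point: exactly one hemisphere supports `C` at `p`. -/
def SmoothPoint {n : ℕ} (C : Set (Esp n)) (p : Esp n) : Prop :=
  ∃! m, SupportsAt C m p

/-- Strict convexity: the boundary contains no nondegenerate great-circle arc. -/
def StrictlyConvexS {n : ℕ} (C : Set (Esp n)) : Prop :=
  ∀ a ∈ sphBoundary C, ∀ b ∈ sphBoundary C, Arc a b ⊆ sphBoundary C → a = b

end


noncomputable section AuxStmt4

open Real

private noncomputable def cross3 (a b : Esp 3) : Esp 3 :=
  (WithLp.equiv 2 (Fin 3 → ℝ)).symm ![a 1*b 2 - a 2*b 1, a 2*b 0 - a 0*b 2, a 0*b 1 - a 1*b 0]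

private lemma cross3_apply0 (a b : Esp 3) : cross3 a b 0 = a 1*b 2 - a 2*b 1 := by simp [cross3]
private lemma cross3_apply1 (a b : Esp 3) : cross3 a b 1 = a 2*b 0 - a 0*b 2 := by simp [cross3]
private lemma cross3_apply2 (a b : Esp 3) : cross3 a b 2 = a 0*b 1 - a 1*b 0 := by simp [cross3]

private lemma inner3 (a b : Esp 3) : (inner ℝ a b : ℝ) = a 0 * b 0 + a 1 * b 1 + a 2 * b 2 := by
  simp [PiLp.inner_apply, Fin.sum_univ_three, RCLike.inner_apply, mul_comm]

private lemma lagr (g0 g1 g2 p0 p1 p2 x0 x1 x2 : ℝ)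
    (hG : g0^2+g1^2+g2^2 = 1) (hP : p0^2+p1^2+p2^2 = 1) (hGP : g0*p0+g1*p1+g2*p2 = 0)
    (hX : x0^2+x1^2+x2^2 = 1) (hGX : g0*x0+g1*x1+g2*x2 = 0) :
    (p0*x0+p1*x1+p2*x2)^2 + ((g1*p2-g2*p1)*x0 + (g2*p0-g0*p2)*x1 + (g0*p1-g1*p0)*x2)^2 = 1 := by
  linear_combination ((p0^2+p1^2+p2^2)*(x0^2+x1^2+x2^2) - (p0*x0+p1*x1+p2*x2)^2)*hG
    + (x0^2+x1^2+x2^2)*hP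
    + (2*(p0*x0+p1*x1+p2*x2)*(g0*x0+g1*x1+g2*x2) - (x0^2+x1^2+x2^2)*(g0*p0+g1*p1+g2*p2))*hGP
    + hX - (p0^2+p1^2+p2^2)*(g0*x0+g1*x1+g2*x2)*hGX

private lemma lagrE (g0 g1 g2 p0 p1 p2 : ℝ)
    (hG : g0^2+g1^2+g2^2 = 1) (hP : p0^2+p1^2+p2^2 = 1) (hGP : g0*p0+g1*p1+g2*p2 = 0) :
    (g1*p2-g2*p1)^2 + (g2*p0-g0*p2)^2 + (g0*p1-g1*p0)^2 = 1 := by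
  linear_combination (p0^2+p1^2+p2^2)*hG + hP - (g0*p0+g1*p1+g2*p2)*hGP

private lemma cos_min' {x y z : ℝ} (hx : -π ≤ x) (hz : z ≤ π) (hxy : x ≤ y) (hyz : y ≤ z) :
    min (Real.cos x) (Real.cos z) ≤ Real.cos y := by
  rcases le_total y 0 with hy | hy
  · refine le_trans (min_le_left _ _) ?_
    have := Real.cos_le_cos_of_nonneg_of_le_pi (x := -y) (y := -x) (by linarith) (by linarith)
      (by linarith)
    simpa using this
  · exact le_trans (min_le_right _ _) (Real.cos_le_cos_of_nonneg_of_le_pi hy hz hyz)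

private lemma arccos_anti {x y : ℝ} (hxy : x ≤ y) : Real.arccos y ≤ Real.arccos x := by
  unfold Real.arccos
  have := Real.monotone_arcsin hxy
  linarith

end AuxStmt4

set_option maxHeartbeats 1600000 in
/-- If `u, v, z` lie on a bounding semicircle `Q = G/H` of a lune `L = G ∩ H`
of thickness at most π/2 with `v` on the arc `uz`, then for every `q ∈ L`,
|qv| ≤ max {|qu|, |qz|}. -/
theorem stmt_4 (g h : Esp 3) (hl : IsLune g h) (ht : lthick g h ≤ Real.pi / 2)
    (u v z : Esp 3) (hu : u ∈ semic g h) (hv : v ∈ semic g h) (hz : z ∈ semic g h)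
    (hvarc : v ∈ Arc u z) (q : Esp 3) (hq : q ∈ Lune g h) :
    sdist q v ≤ max (sdist q u) (sdist q z) := by
  classical
  obtain ⟨hgS, hhS, hne, hne'⟩ := hl
  have hg : ‖g‖ = 1 := hgS
  have hh : ‖h‖ = 1 := hhS
  set c : ℝ := (inner ℝ g h : ℝ) with hc
  have hgg : (inner ℝ g g : ℝ) = 1 := by rw [real_inner_self_eq_norm_sq, hg]; norm_num
  have hhh : (inner ℝ h h : ℝ) = 1 := by rw [real_inner_self_eq_norm_sq, hh]; norm_num
  have hhg : (inner ℝ h g : ℝ) = c := by rw [hc]; exact real_inner_comm g h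
  have hc1 : c ≠ 1 := fun e => hne ((inner_eq_one_iff_of_norm_eq_one hg hh).1 e)
  have hcm1 : c ≠ -1 := by
    intro e
    apply hne'
    have : (inner ℝ g (-h) : ℝ) = 1 := by rw [inner_neg_right, ← hc, e]; norm_num
    exact (inner_eq_one_iff_of_norm_eq_one hg (by rw [norm_neg]; exact hh)).1 this
  have hcabs : |c| ≤ 1 := by
    have := abs_real_inner_le_norm g h
    rw [hg, hh, mul_one] at this; rwa [hc]
  have hcsq : c^2 < 1 := by
    rcases lt_or_eq_of_le hcabs with h1 | h1
    · nlinarith [abs_nonneg c, le_abs_self c, neg_abs_le c, sq_abs c, h1]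
    · rcases abs_eq (by norm_num : (0:ℝ) ≤ 1) |>.1 h1 with h2 | h2 <;> tauto
  have hn1 : ‖h - c • g‖^2 = 1 - c^2 := by
    rw [← real_inner_self_eq_norm_sq]
    simp only [inner_sub_left, inner_sub_right, real_inner_smul_left, real_inner_smul_right,
      hgg, hhh, hhg, ← hc]
    ring
  have hpos : (0:ℝ) < 1 - c^2 := by linarith only [hcsq]
  set N : ℝ := Real.sqrt (1 - c^2) with hNdef
  have hNpos : 0 < N := Real.sqrt_pos.2 hpos
  have hNsq : N^2 = 1 - c^2 := Real.sq_sqrt (le_of_lt hpos)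
  have hN1 : ‖h - c • g‖ = N := by
    rw [hNdef, ← hn1]; exact (Real.sqrt_sq (norm_nonneg _)).symm
  -- thickness computation : c ≤ 0
  have hc0 : c ≤ 0 := by
    have hn2 : ‖g - c • h‖^2 = 1 - c^2 := by
      rw [← real_inner_self_eq_norm_sq]
      simp only [inner_sub_left, inner_sub_right, real_inner_smul_left, real_inner_smul_right,
        hgg, hhh, hhg, ← hc]
      ring
    have hN2 : ‖g - c • h‖ = N := by
      rw [hNdef, ← hn2]; exact (Real.sqrt_sq (norm_nonneg _)).symm
    have hip : (inner ℝ (scCenter g h) (scCenter h g) : ℝ) = -c := by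
      unfold scCenter
      rw [hhg, ← hc]
      rw [real_inner_smul_left, real_inner_smul_right, hN1, hN2]
      have hinner : (inner ℝ (h - c • g) (g - c • h) : ℝ) = -c * (1 - c^2) := by
        simp only [inner_sub_left, inner_sub_right, real_inner_smul_left, real_inner_smul_right,
          hgg, hhh, hhg, ← hc]
        ring
      rw [hinner]
      have hss : N * N = 1 - c^2 := by rw [← hNsq]; ring
      field_simp
      rw [hNsq]; ring
    have hthick : lthick g h = Real.arccos (-c) := by
      unfold lthick sdist; rw [hip]
    rw [hthick] at ht
    have := Real.arccos_le_pi_div_two.mp ht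
    linarith
  -- the center of the semicircle
  obtain ⟨p, hpdef⟩ : ∃ p : Esp 3, p = N⁻¹ • (h - c • g) := ⟨_, rfl⟩
  have hgp : (inner ℝ g p : ℝ) = 0 := by
    rw [hpdef, real_inner_smul_right, inner_sub_right, real_inner_smul_right, ← hc, hgg]
    ring
  have hpp : (inner ℝ p p : ℝ) = 1 := by
    rw [hpdef, real_inner_smul_right, real_inner_smul_left]
    rw [show (inner ℝ (h - c • g) (h - c • g) : ℝ) = 1 - c^2 by
      rw [real_inner_self_eq_norm_sq, hn1]]
    rw [← hNsq]
    field_simp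
  have hpx : ∀ x : Esp 3, (inner ℝ p x : ℝ) = N⁻¹ * ((inner ℝ h x : ℝ) - c * (inner ℝ g x : ℝ)) := by
    intro x
    rw [hpdef, real_inner_smul_left, inner_sub_left, real_inner_smul_left]
  -- coordinates
  have G2 : g 0^2 + g 1^2 + g 2^2 = 1 := by
    have := hgg; rw [inner3] at this; linear_combination this
  have P2 : p 0^2 + p 1^2 + p 2^2 = 1 := by
    have := hpp; rw [inner3] at this; linear_combination this
  have GP0 : g 0*p 0 + g 1*p 1 + g 2*p 2 = 0 := by
    have := hgp; rw [inner3] at this; linear_combination this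
  obtain ⟨e, hedef⟩ : ∃ e : Esp 3, e = cross3 g p := ⟨_, rfl⟩
  have hEx : ∀ x : Esp 3, (inner ℝ e x : ℝ) =
      (g 1*p 2-g 2*p 1)*x 0 + (g 2*p 0-g 0*p 2)*x 1 + (g 0*p 1-g 1*p 0)*x 2 := by
    intro x
    rw [inner3, hedef, cross3_apply0, cross3_apply1, cross3_apply2]
  have hpe : (inner ℝ p e : ℝ) = 0 := by
    rw [real_inner_comm, hEx p]; ring
  have hee : (inner ℝ e e : ℝ) = 1 := by
    rw [hEx e, hedef, cross3_apply0, cross3_apply1, cross3_apply2]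
    linear_combination lagrE (g 0) (g 1) (g 2) (p 0) (p 1) (p 2) G2 P2 GP0
  -- key facts for points on the semicircle
  have key1 : ∀ x, x ∈ semic g h →
      (inner ℝ p x : ℝ)^2 + (inner ℝ e x : ℝ)^2 = 1 := by
    intro x hx
    obtain ⟨hxS, hgx, hhx⟩ := hx
    have hxx : (inner ℝ x x : ℝ) = 1 := by
      rw [real_inner_self_eq_norm_sq, show ‖x‖ = 1 from hxS]; norm_num
    have X2 : x 0^2 + x 1^2 + x 2^2 = 1 := by
      have := hxx; rw [inner3] at this; linear_combination this
    have GX0 : g 0*x 0 + g 1*x 1 + g 2*x 2 = 0 := by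
      have := hgx; rw [inner3] at this; linear_combination this
    rw [hEx x, inner3]
    have := lagr (g 0) (g 1) (g 2) (p 0) (p 1) (p 2) (x 0) (x 1) (x 2) G2 P2 GP0 X2 GX0
    linear_combination this
  have key2 : ∀ x, x ∈ semic g h →
      x = (inner ℝ p x : ℝ) • p + (inner ℝ e x : ℝ) • e := by
    intro x hx
    obtain ⟨hxS, hgx, hhx⟩ := hx
    have hxx : (inner ℝ x x : ℝ) = 1 := by
      rw [real_inner_self_eq_norm_sq, show ‖x‖ = 1 from hxS]; norm_num
    set s : ℝ := (inner ℝ p x : ℝ) with hs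
    set t : ℝ := (inner ℝ e x : ℝ) with htt
    have h1 : (inner ℝ (x - (s • p + t • e)) (x - (s • p + t • e)) : ℝ) = 0 := by
      have c1 : (inner ℝ x p : ℝ) = s := (real_inner_comm p x).trans hs.symm
      have c2 : (inner ℝ x e : ℝ) = t := (real_inner_comm e x).trans htt.symm
      have c3 : (inner ℝ e p : ℝ) = 0 := (real_inner_comm p e).trans hpe
      have h4 := key1 x ⟨hxS, hgx, hhx⟩
      rw [← hs, ← htt] at h4
      simp only [inner_sub_left, inner_sub_right, inner_add_left, inner_add_right,
        real_inner_smul_left, real_inner_smul_right, hpp, hee, hpe, hxx, c1, c2, c3,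
        ← hs, ← htt]
      linear_combination -h4
    have h2 : x - (s • p + t • e) = 0 := by
      exact inner_self_eq_zero.mp h1
    have := sub_eq_zero.mp h2
    exact this
  clear hEx G2 P2 GP0 hedef
  -- angles
  obtain ⟨θu, hθu⟩ : ∃ t, t = Real.arccos (inner ℝ e u : ℝ) := ⟨_, rfl⟩
  obtain ⟨θv, hθv⟩ : ∃ t, t = Real.arccos (inner ℝ e v : ℝ) := ⟨_, rfl⟩
  obtain ⟨θz, hθz⟩ : ∃ t, t = Real.arccos (inner ℝ e z : ℝ) := ⟨_, rfl⟩
  have pack : ∀ x, x ∈ semic g h →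
      Real.cos (Real.arccos (inner ℝ e x : ℝ)) = (inner ℝ e x : ℝ) ∧
      Real.sin (Real.arccos (inner ℝ e x : ℝ)) = (inner ℝ p x : ℝ) := by
    intro x hx
    have h1 := key1 x hx
    have hs0 : 0 ≤ (inner ℝ p x : ℝ) := by
      rw [hpx x, hx.2.1]
      have h5 := hx.2.2
      have h6 : (0:ℝ) ≤ N⁻¹ := by positivity
      have h7 : 0 ≤ (inner ℝ h x : ℝ) - c * 0 := by linarith only [h5]
      exact mul_nonneg h6 h7
    have ht2 : ((inner ℝ e x : ℝ))^2 ≤ 1 :=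
      by linarith only [h1, sq_nonneg ((inner ℝ p x : ℝ))]
    have ht4 : (inner ℝ e x : ℝ) * (inner ℝ e x : ℝ) ≤ 1 := by
      rw [← pow_two]; exact ht2
    have ht3 := abs_le.mp (abs_le_one_iff_mul_self_le_one.mpr ht4)
    constructor
    · exact Real.cos_arccos ht3.1 ht3.2
    · rw [Real.sin_arccos,
        show 1 - (inner ℝ e x : ℝ)^2 = (inner ℝ p x : ℝ)^2 by linarith only [h1]]
      exact Real.sqrt_sq hs0
  have hdist : ∀ x, x ∈ semic g h → ∀ y, y ∈ semic g h →
      sdist x y = |Real.arccos (inner ℝ e x : ℝ) - Real.arccos (inner ℝ e y : ℝ)| := by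
    intro x hx y hy
    have hxy : (inner ℝ x y : ℝ) = Real.cos (Real.arccos (inner ℝ e x : ℝ) -
        Real.arccos (inner ℝ e y : ℝ)) := by
      rw [Real.cos_sub, (pack x hx).1, (pack y hy).1, (pack x hx).2, (pack y hy).2]
      conv_lhs => rw [key2 x hx]
      rw [inner_add_left, real_inner_smul_left, real_inner_smul_left]
      ring
    unfold sdist
    rw [hxy, ← Real.cos_abs]
    exact Real.arccos_cos (abs_nonneg _) (by
      have h1 := Real.arccos_nonneg (inner ℝ e x : ℝ)
      have h2 := Real.arccos_le_pi (inner ℝ e x : ℝ)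
      have h3 := Real.arccos_nonneg (inner ℝ e y : ℝ)
      have h4 := Real.arccos_le_pi (inner ℝ e y : ℝ)
      rw [abs_le]; constructor <;> linarith)
  -- betweenness of θv
  obtain ⟨hvS, hArc⟩ := hvarc
  rw [hdist u hu v hv, hdist v hv z hz, hdist u hu z hz,
    ← hθu, ← hθv, ← hθz] at hArc
  have hθu0 : 0 ≤ θu := hθu ▸ Real.arccos_nonneg _
  have hθuπ : θu ≤ Real.pi := hθu ▸ Real.arccos_le_pi _
  have hθv0 : 0 ≤ θv := hθv ▸ Real.arccos_nonneg _
  have hθvπ : θv ≤ Real.pi := hθv ▸ Real.arccos_le_pi _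
  have hθz0 : 0 ≤ θz := hθz ▸ Real.arccos_nonneg _
  have hθzπ : θz ≤ Real.pi := hθz ▸ Real.arccos_le_pi _
  have hbet1 : min θu θz ≤ θv := by
    rcases le_total θu θz with h' | h'
    · rw [min_eq_left h']
      rw [abs_of_nonpos (by linarith : θu - θz ≤ 0)] at hArc
      have a1 := le_abs_self (θu - θv)
      have a3 : θz - θv ≤ |θv - θz| := by rw [abs_sub_comm]; exact le_abs_self _
      linarith only [a1, a3, hArc]
    · rw [min_eq_right h']
      rw [abs_of_nonneg (by linarith : 0 ≤ θu - θz)] at hArc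
      have a1 := le_abs_self (θu - θv)
      have a2 : θz - θv ≤ |θv - θz| := by rw [abs_sub_comm]; exact le_abs_self _
      linarith only [a1, a2, hArc]
  have hbet2 : θv ≤ max θu θz := by
    rcases le_total θu θz with h' | h'
    · rw [max_eq_right h']
      rw [abs_of_nonpos (by linarith : θu - θz ≤ 0)] at hArc
      have a1 : θv - θu ≤ |θu - θv| := by rw [abs_sub_comm]; exact le_abs_self _
      have a2 := le_abs_self (θv - θz)
      linarith only [a1, a2, hArc]
    · rw [max_eq_left h']
      rw [abs_of_nonneg (by linarith : 0 ≤ θu - θz)] at hArc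
      have a1 : θv - θu ≤ |θu - θv| := by rw [abs_sub_comm]; exact le_abs_self _
      have a2 := le_abs_self (θv - θz)
      linarith only [a1, a2, hArc]
  -- decomposition of q against the semicircle points
  obtain ⟨⟨hqS, hgq⟩, ⟨-, hhq⟩⟩ := hq
  set β : ℝ := (inner ℝ q p : ℝ) with hβ
  set γ : ℝ := (inner ℝ q e : ℝ) with hγ
  have hβ0 : 0 ≤ β := by
    rw [hβ, ← real_inner_comm q p, hpx q]
    have h7 : c * (inner ℝ g q : ℝ) ≤ 0 := mul_nonpos_of_nonpos_of_nonneg hc0 hgq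
    have h1 : 0 ≤ (inner ℝ h q : ℝ) - c * (inner ℝ g q : ℝ) := by linarith only [h7, hhq]
    have h6 : (0:ℝ) ≤ N⁻¹ := by positivity
    exact mul_nonneg h6 h1
  have hqx : ∀ x, x ∈ semic g h → (inner ℝ q x : ℝ) =
      β * (inner ℝ p x : ℝ) + γ * (inner ℝ e x : ℝ) := by
    intro x hx
    conv_lhs => rw [key2 x hx]
    rw [inner_add_right, real_inner_smul_right, real_inner_smul_right, hβ, hγ]
    ring
  -- the final inequality on inner products
  have hmain : min (inner ℝ q u : ℝ) (inner ℝ q z : ℝ) ≤ (inner ℝ q v : ℝ) := by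
    rcases eq_or_lt_of_le (by positivity : (0:ℝ) ≤ β^2 + γ^2) with hR0 | hRpos
    · have hβz : β = 0 := by
        have h7 : β^2 = 0 := by linarith only [hR0, sq_nonneg β, sq_nonneg γ]
        exact pow_eq_zero_iff (two_ne_zero) |>.mp h7
      have hγz : γ = 0 := by
        have h7 : γ^2 = 0 := by linarith only [hR0, sq_nonneg β, sq_nonneg γ]
        exact pow_eq_zero_iff (two_ne_zero) |>.mp h7
      rw [hqx u hu, hqx v hv, hqx z hz, hβz, hγz]
      simp
    · set R : ℝ := Real.sqrt (β^2 + γ^2) with hRdef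
      have hRp : 0 < R := Real.sqrt_pos.2 hRpos
      have hRsq : R^2 = β^2 + γ^2 := Real.sq_sqrt (le_of_lt hRpos)
      set φ : ℝ := Real.arccos (γ / R) with hφ
      have hγR : |γ / R| ≤ 1 := by
        rw [abs_div, abs_of_pos hRp, div_le_one hRp, hRdef]
        rw [Real.le_sqrt (abs_nonneg γ) (le_of_lt hRpos), sq_abs]
        linarith only [sq_nonneg β]

      have hcosφ : Real.cos φ = γ / R := Real.cos_arccos
        (by linarith only [hγR, neg_abs_le (γ / R)])
        (by linarith only [hγR, le_abs_self (γ / R)])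
      have hsinφ : Real.sin φ = β / R := by
        rw [hφ, Real.sin_arccos]
        rw [show 1 - (γ / R)^2 = (β / R)^2 by
          field_simp
          linear_combination hRsq]
        exact Real.sqrt_sq (by positivity)
      have hφ0 : 0 ≤ φ := Real.arccos_nonneg _
      have hφπ : φ ≤ Real.pi := Real.arccos_le_pi _
      have hqcos : ∀ x, x ∈ semic g h → (inner ℝ q x : ℝ) =
          R * Real.cos (Real.arccos (inner ℝ e x : ℝ) - φ) := by
        intro x hx
        rw [Real.cos_sub, hcosφ, hsinφ, (pack x hx).1, (pack x hx).2, hqx x hx]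
        field_simp
        ring
      rw [hqcos u hu, hqcos v hv, hqcos z hz]
      have hcm : min (Real.cos (θu - φ)) (Real.cos (θz - φ)) ≤ Real.cos (θv - φ) := by
        rcases le_total θu θz with h' | h'
        · have := cos_min' (x := θu - φ) (y := θv - φ) (z := θz - φ)
            (by linarith) (by linarith)
            (by have := hbet1; rw [min_eq_left h'] at this; linarith)
            (by have := hbet2; rw [max_eq_right h'] at this; linarith)
          exact this
        · have := cos_min' (x := θz - φ) (y := θv - φ) (z := θu - φ)
            (by linarith) (by linarith)
            (by have := hbet1; rw [min_eq_right h'] at this; linarith)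
            (by have := hbet2; rw [max_eq_left h'] at this; linarith)
          rw [min_comm] at this
          exact this
      rw [← hθu, ← hθv, ← hθz]
      rcases le_total (Real.cos (θu - φ)) (Real.cos (θz - φ)) with h' | h'
      · rw [min_eq_left h'] at hcm
        refine le_trans (min_le_left _ _) ?_
        exact mul_le_mul_of_nonneg_left hcm (le_of_lt hRp)
      · rw [min_eq_right h'] at hcm
        refine le_trans (min_le_right _ _) ?_
        exact mul_le_mul_of_nonneg_left hcm (le_of_lt hRp)
  -- conclude via the antitonicity of arccos
  have h1 : sdist q v ≤ Real.arccos (min (inner ℝ q u : ℝ) (inner ℝ q z : ℝ)) :=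
    arccos_anti hmain
  refine le_trans h1 ?_
  rcases le_total (inner ℝ q u : ℝ) (inner ℝ q z : ℝ) with h' | h'
  · rw [min_eq_left h']
    exact le_max_left _ _
  · rw [min_eq_right h']
    exact le_max_right _ _
end

section
/- Let C ⊂ S^2 be a spherically convex body with diameter at most π/2. Then the diameter of the set E(C) of extreme points of C equals the diameter of C. -/
/-!
Let `D ≤ π/2` be the diameter of `C`, attained at `a, b ∈ C`. Among the points of `C` at distance
`D` from `b` choose `e` minimising `⟪a, ·⟫`. If `e` were interior to an arc `pq ⊆ C`, then
`e = α p + β q` with `α, β > 0` and `α + β > 1`. As `⟪b, ·⟫ ≥ cos D ≥ 0` on `C` with equality at `e`,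
this forces `⟪b, p⟫ = ⟪b, q⟫ = cos D = 0`; so `D = π/2`, `p` and `q` are also at distance `D` from
`b`, and the same argument applied to `⟪a, ·⟫ ≥ 0` gives `⟪a, p⟫ = ⟪a, q⟫ = 0`. But two independent
pairs `a, b` and `p, q` cannot be orthogonal in `ℝ³`. So `e` is extreme, and running the argument
again from the pair `b, e` yields an extreme `e'` with `d(e', e) = D`.
-/

open Real Module
open scoped RealInnerProductSpace

section SphericalDistance

variable {n : ℕ}

theorem cos_sdist {x y : Esp n} (hx : ‖x‖ = 1) (hy : ‖y‖ = 1) : cos (sdist x y) = ⟪x, y⟫ := by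
  have h := abs_real_inner_le_norm x y
  rw [hx, hy, one_mul] at h
  exact cos_arccos (abs_le.1 h).1 (abs_le.1 h).2

theorem sdist_comm (x y : Esp n) : sdist x y = sdist y x := by
  rw [sdist, sdist, real_inner_comm]

theorem sdist_nonneg (x y : Esp n) : 0 ≤ sdist x y := arccos_nonneg _

theorem sdist_le_pi (x y : Esp n) : sdist x y ≤ π := arccos_le_pi _

theorem sdist_eq_zero_iff {x y : Esp n} (hx : ‖x‖ = 1) (hy : ‖y‖ = 1) :
    sdist x y = 0 ↔ x = y := by
  rw [sdist, arccos_eq_zero, ← inner_eq_one_iff_of_norm_eq_one (𝕜 := ℝ) hx hy]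
  refine ⟨fun h => le_antisymm ?_ h, fun h => h.ge⟩
  simpa [hx, hy] using real_inner_le_norm x y

theorem sdist_lt_pi {x y : Esp n} (hx : ‖x‖ = 1) (hy : ‖y‖ = 1) (hxy : x ≠ -y) :
    sdist x y < π := by
  refine (sdist_le_pi x y).lt_of_ne fun h => hxy ?_
  have h1 : ⟪x, y⟫ = -1 := by
    rw [← cos_sdist hx hy, h, cos_pi]
  rw [← inner_eq_one_iff_of_norm_eq_one (𝕜 := ℝ) hx (by rwa [norm_neg]), inner_neg_right, h1,
    neg_neg]

theorem sdist_eq_pi_div_two_iff (x y : Esp n) : sdist x y = π / 2 ↔ ⟪x, y⟫ = 0 :=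
  arccos_eq_pi_div_two

theorem cos_le_inner_of_sdist_le {x y : Esp n} (hx : ‖x‖ = 1) (hy : ‖y‖ = 1) {D : ℝ}
    (hxy : sdist x y ≤ D) (hD : D ≤ π) : cos D ≤ ⟪x, y⟫ :=
  cos_sdist hx hy ▸ cos_le_cos_of_nonneg_of_le_pi (sdist_nonneg x y) hD hxy

theorem eq_of_mem_Arc_self {p x : Esp n} (hp : ‖p‖ = 1) (hx : x ∈ Arc p p) : x = p := by
  obtain ⟨hx1, hsum⟩ := hx
  have hpp : sdist p p = 0 := (sdist_eq_zero_iff hp hp).2 rfl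
  have hpx : sdist p x = 0 := by linarith [sdist_nonneg p x, sdist_nonneg x p]
  exact ((sdist_eq_zero_iff hp hx1).1 hpx).symm

/-- With `s = d(p, z)` and `t = d(z, q)`, the coefficients are `sin t / sin (s + t)` and
`sin s / sin (s + t)`, as in the spherical law of sines. -/
theorem exists_smul_add_smul_of_mem_Arc {p q z : Esp n} (hp : ‖p‖ = 1) (hq : ‖q‖ = 1)
    (hpq : p ≠ -q) (hz : z ∈ Arc p q) (hzp : z ≠ p) (hzq : z ≠ q) :
    ∃ α β : ℝ, 0 < α ∧ 0 < β ∧ 1 < α + β ∧ z = α • p + β • q := by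
  obtain ⟨hz1, harc⟩ := hz
  have hz1 : ‖z‖ = 1 := hz1
  set s := sdist p z
  set t := sdist z q
  have hs : 0 < s := (sdist_nonneg p z).lt_of_ne' (mt (sdist_eq_zero_iff hp hz1).1 hzp.symm)
  have ht : 0 < t := (sdist_nonneg z q).lt_of_ne' (mt (sdist_eq_zero_iff hz1 hq).1 hzq)
  have hst : s + t < π := harc ▸ sdist_lt_pi hp hq hpq
  have hsin_s : 0 < sin s := sin_pos_of_pos_of_lt_pi hs (by linarith)
  have hsin_t : 0 < sin t := sin_pos_of_pos_of_lt_pi ht (by linarith)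
  have hsin_st : 0 < sin (s + t) := sin_pos_of_pos_of_lt_pi (by linarith) hst
  have hcos_s : cos s < 1 := by nlinarith [sin_sq_add_cos_sq s, cos_le_one s]
  have hcos_t : cos t < 1 := by nlinarith [sin_sq_add_cos_sq t, cos_le_one t]
  refine ⟨sin t / sin (s + t), sin s / sin (s + t), div_pos hsin_t hsin_st,
    div_pos hsin_s hsin_st, ?_, ?_⟩
  · rw [← add_div, one_lt_div hsin_st, sin_add]
    nlinarith [mul_pos hsin_s (sub_pos.2 hcos_t), mul_pos hsin_t (sub_pos.2 hcos_s)]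
  have hpz : ⟪p, z⟫ = cos s := (cos_sdist hp hz1).symm
  have hzq : ⟪z, q⟫ = cos t := (cos_sdist hz1 hq).symm
  have hpq_anti : ⟪p, q⟫ = cos (s + t) := by rw [harc]; exact (cos_sdist hp hq).symm
  have hpp : ⟪p, p⟫ = 1 := by rw [real_inner_self_eq_norm_sq, hp, one_pow]
  have hqq : ⟪q, q⟫ = 1 := by rw [real_inner_self_eq_norm_sq, hq, one_pow]
  have hzz : ⟪z, z⟫ = 1 := by rw [real_inner_self_eq_norm_sq, hz1, one_pow]
  rw [← sub_eq_zero, ← inner_self_eq_zero (𝕜 := ℝ)]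
  simp only [inner_sub_left, inner_sub_right, inner_add_left, inner_add_right,
    real_inner_smul_left, real_inner_smul_right, real_inner_comm p z, real_inner_comm z q,
    real_inner_comm p q, hpp, hqq, hzz, hpz, hzq, hpq_anti]
  field_simp
  rw [sin_add, cos_add]
  linear_combination (-(sin t) ^ 2) * sin_sq_add_cos_sq s - sin s ^ 2 * sin_sq_add_cos_sq t

theorem inner_eq_zero_of_mem_Arc {u p q z : Esp n} (hp : ‖p‖ = 1) (hq : ‖q‖ = 1)
    (hpq : p ≠ -q) (hz : z ∈ Arc p q) (hzp : z ≠ p) (hzq : z ≠ q) (hz0 : 0 ≤ ⟪u, z⟫)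
    (hup : ⟪u, z⟫ ≤ ⟪u, p⟫) (huq : ⟪u, z⟫ ≤ ⟪u, q⟫) :
    ⟪u, p⟫ = 0 ∧ ⟪u, q⟫ = 0 ∧ ⟪u, z⟫ = 0 := by
  obtain ⟨α, β, hα, hβ, hαβ, rfl⟩ := exists_smul_add_smul_of_mem_Arc hp hq hpq hz hzp hzq
  simp only [inner_add_right, real_inner_smul_right] at hz0 hup huq ⊢
  have hz : α * ⟪u, p⟫ + β * ⟪u, q⟫ = 0 := by
    nlinarith [mul_le_mul_of_nonneg_left hup hα.le, mul_le_mul_of_nonneg_left huq hβ.le]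
  refine ⟨?_, ?_, hz⟩ <;>
    nlinarith [mul_nonneg hα.le (hz0.trans hup), mul_nonneg hβ.le (hz0.trans huq)]

end SphericalDistance

section ThreeSpace

variable {E : Type*} [NormedAddCommGroup E] [InnerProductSpace ℝ E]

theorem eq_or_eq_neg_of_mem_span_singleton {x y : E} (hx : ‖x‖ = 1) (hy : ‖y‖ = 1)
    (h : y ∈ ℝ ∙ x) : y = x ∨ y = -x := by
  obtain ⟨r, rfl⟩ := Submodule.mem_span_singleton.1 h
  rw [norm_smul, hx, mul_one, Real.norm_eq_abs] at hy
  rcases (abs_eq zero_le_one).1 hy with rfl | rfl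
  · exact Or.inl (one_smul ℝ x)
  · exact Or.inr (neg_one_smul ℝ x)

theorem linearIndependent_pair_of_norm_eq_one {x y : E} (hx : ‖x‖ = 1) (hy : ‖y‖ = 1)
    (hxy : x ≠ y) (hxy' : x ≠ -y) : LinearIndependent ℝ ![x, y] := by
  rw [LinearIndependent.pair_iff' (norm_ne_zero_iff.1 (hx ▸ one_ne_zero))]
  intro r hr
  rcases eq_or_eq_neg_of_mem_span_singleton hx hy (Submodule.mem_span_singleton.2 ⟨r, hr⟩)
    with rfl | rfl
  · exact hxy rfl
  · exact hxy' (neg_neg x).symm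

theorem not_isOrtho_span_pair_of_finrank_eq_three [FiniteDimensional ℝ E] (hE : finrank ℝ E = 3)
    {a b p q : E} (hab : LinearIndependent ℝ ![a, b]) (hpq : LinearIndependent ℝ ![p, q]) :
    ¬ Submodule.span ℝ {a, b} ⟂ Submodule.span ℝ {p, q} := by
  have finrank_span_pair {x y : E} (hxy : LinearIndependent ℝ ![x, y]) :
      finrank ℝ (Submodule.span ℝ {x, y}) = 2 := by
    have h := finrank_span_eq_card hxy
    rwa [Matrix.range_cons_cons_empty, Fintype.card_fin] at h
  intro h
  have hle := Submodule.finrank_mono (Submodule.isOrtho_iff_le.1 h)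
  have hsum := (Submodule.span ℝ {p, q}).finrank_add_finrank_orthogonal
  rw [finrank_span_pair hab] at hle
  rw [finrank_span_pair hpq, hE] at hsum
  omega

end ThreeSpace

section Diameter

variable {n : ℕ}

theorem isCompact_of_subset_uSphere {C : Set (Esp n)} (hsub : C ⊆ uSphere n)
    (hcl : IsClosed C) : IsCompact C :=
  (isCompact_sphere (0 : Esp n) 1).of_isClosed_subset hcl fun _ hx =>
    mem_sphere_zero_iff_norm.2 (hsub hx)

theorem isGreatest_sdiam {C : Set (Esp n)} (hC : IsCompact C) (hne : C.Nonempty) :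
    IsGreatest {t | ∃ a ∈ C, ∃ b ∈ C, sdist a b = t} (sdiam C) := by
  have hcpt : IsCompact (Set.image2 sdist C C) := by
    rw [← Set.image_prod]
    exact (hC.prod hC).image (continuous_arccos.comp continuous_inner)
  exact hcpt.isGreatest_sSup (hne.image2 hne)

end Diameter

theorem extremeP_of_isMinOn_inner {C : Set (Esp 3)} (hsub : C ⊆ uSphere 3)
    (hanti : ∀ x ∈ C, -x ∉ C) {D : ℝ} (hD : ∀ x ∈ C, ∀ y ∈ C, sdist x y ≤ D)
    (hDpi : D ≤ π / 2) {a b e : Esp 3} (ha : a ∈ C) (hb : b ∈ C) (hab : sdist a b = D)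
    (he : e ∈ C ∩ {x | sdist x b = D})
    (hmin : IsMinOn (fun x => ⟪a, x⟫) (C ∩ {x | sdist x b = D}) e) :
    ExtremeP C e := by
  obtain ⟨heC, heb⟩ := he
  have unit : ∀ x ∈ C, ‖x‖ = 1 := hsub
  have hcos : ∀ x ∈ C, ∀ y ∈ C, cos D ≤ ⟪x, y⟫ := fun x hx y hy =>
    cos_le_inner_of_sdist_le (unit x hx) (unit y hy) (hD x hx y hy) (by linarith [pi_pos])
  have hcosD : 0 ≤ cos D :=
    cos_nonneg_of_mem_Icc ⟨by linarith [pi_pos, hab ▸ sdist_nonneg a b], hDpi⟩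
  refine ⟨heC, fun p hp q hq he => ?_⟩
  by_contra! hne
  have hpq : p ≠ q := by
    rintro rfl
    exact hne.1 (eq_of_mem_Arc_self (unit p hp) he)
  have hpq_anti : p ≠ -q := fun h => hanti q hq (h ▸ hp)
  have hbe : ⟪b, e⟫ = cos D := by
    rw [← cos_sdist (unit b hb) (unit e heC), sdist_comm, heb]
  obtain ⟨hbp, hbq, hbe0⟩ := inner_eq_zero_of_mem_Arc (unit p hp) (unit q hq) hpq_anti he hne.1
    hne.2 (hbe ▸ hcosD) (hbe ▸ hcos b hb p hp) (hbe ▸ hcos b hb q hq)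
  have hDeq : D = π / 2 := heb ▸ (sdist_eq_pi_div_two_iff e b).2 (by rwa [real_inner_comm])
  have hmem : ∀ x ∈ C, ⟪b, x⟫ = 0 → x ∈ C ∩ {x | sdist x b = D} := fun x hx hbx =>
    ⟨hx, hDeq ▸ (sdist_eq_pi_div_two_iff x b).2 (by rwa [real_inner_comm])⟩
  obtain ⟨hap, haq, -⟩ := inner_eq_zero_of_mem_Arc (unit p hp) (unit q hq) hpq_anti he hne.1
    hne.2 (hcosD.trans (hcos a ha e heC)) (isMinOn_iff.1 hmin p (hmem p hp hbp))
    (isMinOn_iff.1 hmin q (hmem q hq hbq))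
  have hab_anti : a ≠ -b := fun h => hanti b hb (h ▸ ha)
  have hab_ne : a ≠ b := by
    rintro rfl
    rw [(sdist_eq_zero_iff (unit a ha) (unit a ha)).2 rfl] at hab
    linarith [pi_pos]
  refine not_isOrtho_span_pair_of_finrank_eq_three finrank_euclideanSpace_fin
    (linearIndependent_pair_of_norm_eq_one (unit a ha) (unit b hb) hab_ne hab_anti)
    (linearIndependent_pair_of_norm_eq_one (unit p hp) (unit q hq) hpq hpq_anti)
    (Submodule.isOrtho_span.2 ?_)
  rintro u (rfl | rfl) v (rfl | rfl) <;> assumption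

theorem exists_extremeP_sdist_eq {C : Set (Esp 3)} (hsub : C ⊆ uSphere 3)
    (hanti : ∀ x ∈ C, -x ∉ C) (hcl : IsClosed C) {D : ℝ}
    (hD : ∀ x ∈ C, ∀ y ∈ C, sdist x y ≤ D) (hDpi : D ≤ π / 2)
    {a b : Esp 3} (ha : a ∈ C) (hb : b ∈ C) (hab : sdist a b = D) :
    ∃ e, ExtremeP C e ∧ sdist e b = D := by
  have hcont : Continuous fun x : Esp 3 => sdist x b :=
    continuous_arccos.comp (continuous_id.inner continuous_const)
  have hF : IsCompact (C ∩ {x | sdist x b = D}) :=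
    (isCompact_of_subset_uSphere hsub hcl).inter_right (isClosed_eq hcont continuous_const)
  obtain ⟨e, he, hmin⟩ := hF.exists_isMinOn ⟨a, ha, hab⟩
    (continuous_const.inner (𝕜 := ℝ) continuous_id).continuousOn
  exact ⟨e, extremeP_of_isMinOn_inner hsub hanti hD hDpi ha hb hab he hmin, he.2⟩

/-- For a spherical convex body C ⊂ S² of diameter at most π/2, the diameter of
the set of extreme points of C equals the diameter of C. -/
theorem stmt_5 (C : Set (Esp 3)) (hC : SphBody C) (hd : sdiam C ≤ Real.pi / 2) :
    sdiam {e | ExtremeP C e} = sdiam C := by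
  obtain ⟨⟨hsub, hanti, -⟩, hcl, c, hc, ε, hε, hball⟩ := hC
  have hne : C.Nonempty := ⟨c, hball c hc (by rwa [dist_self])⟩
  obtain ⟨⟨a, ha, b, hb, hab⟩, hle⟩ :=
    isGreatest_sdiam (isCompact_of_subset_uSphere hsub hcl) hne
  have hD : ∀ x ∈ C, ∀ y ∈ C, sdist x y ≤ sdiam C := fun x hx y hy =>
    hle ⟨x, hx, y, hy, rfl⟩
  obtain ⟨e₁, he₁, he₁b⟩ := exists_extremeP_sdist_eq hsub hanti hcl hD hd ha hb hab
  obtain ⟨e₂, he₂, he₂e₁⟩ := exists_extremeP_sdist_eq hsub hanti hcl hD hd hb he₁.1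
    ((sdist_comm b e₁).trans he₁b)
  refine IsGreatest.csSup_eq ⟨⟨e₂, he₂, e₁, he₁, he₂e₁⟩, ?_⟩
  rintro t ⟨x, hx, y, hy, rfl⟩
  exact hD x hx.1 y hy.1
end

section
/- There exists a spherical convex body C ⊂ S^2 (an isosceles spherical triangle with arms longer than π/2 and base shorter than π/2) whose thickness is at most π/2 but for which the diameter of the set of extreme points is strictly smaller than the diameter of C. -/
/-!
The example is the spherical triangle with apex `N = (0, 0, 1)` and base vertices
`B± = (16/25, ±12/25, -3/5)`: its arms have length `arccos (-3/5) > π/2` and its base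
`arccos (337/625) < π/2`. It lies in the lune bounded by the great circles of its two arms, and
a lune `G ∩ H` has thickness `arccos (-⟪g, h⟫)`, here `arccos (7/25) ≤ π/2`.

A point of an intersection of hemispheres lying on at most one of the bounding great circles
is the midpoint of a short great-circle arc inside the intersection (move along a great circle
orthogonal to that boundary circle), so it is not extreme. Hence the extreme points of the
triangle are its vertices, whose diameter is `arccos (-3/5)`. But `M = (351, 0, -280)/449` lies
in the triangle and `⟪N, M⟫ = -280/449 < -3/5`, so the triangle has a larger diameter.
-/

open Real InnerProductGeometry Filter Topology
open scoped RealInnerProductSpace NNReal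

section Hemispheres

variable {n : ℕ}

lemma sdist_eq_angle {a b : Esp n} (ha : ‖a‖ = 1) (hb : ‖b‖ = 1) : sdist a b = angle a b := by
  simp [sdist, angle, ha, hb]

lemma mem_span_of_mem_arc {a b x : Esp n} (ha : ‖a‖ = 1) (hb : ‖b‖ = 1) (hab : a ≠ -b)
    (hx : x ∈ Arc a b) : x ∈ Submodule.span ℝ≥0 {a, b} := by
  obtain ⟨hx1 : ‖x‖ = 1, hsum⟩ := hx
  rw [sdist_eq_angle ha hx1, sdist_eq_angle hx1 hb, sdist_eq_angle ha hb] at hsum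
  refine ((angle_eq_angle_add_angle_iff (norm_ne_zero_iff.1 (by rw [hx1]; simp))).1
    hsum.symm).resolve_left fun hpi => hab ?_
  rw [← inner_eq_neg_one_iff_of_norm_eq_one (𝕜 := ℝ) ha hb, ← cos_angle_mul_norm_mul_norm, hpi,
    ha, hb]
  simp

lemma arc_subset_hemi {a b m : Esp n} (ha : a ∈ Hemi m) (hb : b ∈ Hemi m) (hab : a ≠ -b) :
    Arc a b ⊆ Hemi m := by
  intro x hx
  obtain ⟨s, t, rfl⟩ := Submodule.mem_span_pair.1 (mem_span_of_mem_arc ha.1 hb.1 hab hx)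
  refine ⟨hx.1, ?_⟩
  simp only [inner_add_right, NNReal.smul_def, real_inner_smul_right]
  exact add_nonneg (mul_nonneg s.2 ha.2) (mul_nonneg t.2 hb.2)

lemma isClosed_hemi (m : Esp n) : IsClosed (Hemi m) :=
  show IsClosed ({x | ‖x‖ = 1} ∩ {x | 0 ≤ ⟪m, x⟫}) from
    (isClosed_eq continuous_norm continuous_const).inter
      (isClosed_le continuous_const (continuous_const.inner continuous_id))

variable {ι : Type*} {g : ι → Esp n}

lemma sphConvex_iInter_hemi [Nonempty ι] (hspan : ∀ x, (∀ i, ⟪g i, x⟫ = 0) → x = 0) :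
    SphConvex (⋂ i, Hemi (g i)) := by
  have hsphere : (⋂ i, Hemi (g i)) ⊆ uSphere n :=
    (Set.iInter_subset _ (Classical.arbitrary ι)).trans fun x hx => hx.1
  have hanti : ∀ x ∈ ⋂ i, Hemi (g i), -x ∉ ⋂ i, Hemi (g i) := by
    intro x hx hneg
    simp only [Set.mem_iInter] at hx hneg
    have : x = 0 := hspan x fun i => le_antisymm
      (by simpa [inner_neg_right] using (hneg i).2) (hx i).2
    simpa [this, uSphere] using hsphere (Set.mem_iInter.2 hx)
  refine ⟨hsphere, hanti, fun a ha b hb => ?_⟩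
  have hab : a ≠ -b := fun h => hanti b hb (h ▸ ha)
  simp only [Set.mem_iInter] at ha hb
  exact Set.subset_iInter fun i => arc_subset_hemi (ha i) (hb i) hab

lemma mem_sphInterior_iInter_hemi [Finite ι] {x : Esp n} (hx : ‖x‖ = 1)
    (hpos : ∀ i, 0 < ⟪g i, x⟫) : x ∈ sphInterior (⋂ i, Hemi (g i)) := by
  have hopen : IsOpen {y : Esp n | ∀ i, 0 < ⟪g i, y⟫} := by
    simp only [Set.ofPred_forall]
    exact isOpen_iInter_of_finite fun i =>
      isOpen_lt continuous_const (continuous_const.inner continuous_id)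
  obtain ⟨ε, hε, hball⟩ := Metric.isOpen_iff.1 hopen x hpos
  exact ⟨hx, ε, hε, fun y hy hyx => Set.mem_iInter.2 fun i => ⟨hy, (hball hyx i).le⟩⟩

lemma sphBody_iInter_hemi [Finite ι] [Nonempty ι] (hspan : ∀ x, (∀ i, ⟪g i, x⟫ = 0) → x = 0)
    {x : Esp n} (hx : ‖x‖ = 1) (hpos : ∀ i, 0 < ⟪g i, x⟫) : SphBody (⋂ i, Hemi (g i)) :=
  ⟨sphConvex_iInter_hemi hspan, isClosed_iInter fun i => isClosed_hemi (g i),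
    x, mem_sphInterior_iInter_hemi hx hpos⟩

end Hemispheres

section GreatCircle

variable {n : ℕ} {e v : Esp n}

noncomputable def greatCircle (e v : Esp n) (θ : ℝ) : Esp n := cos θ • e + sin θ • v

lemma greatCircle_zero (e v : Esp n) : greatCircle e v 0 = e := by simp [greatCircle]

variable (he : ‖e‖ = 1) (hv : ‖v‖ = 1) (hev : ⟪e, v⟫ = 0)
include he hv hev

lemma inner_greatCircle (φ ψ : ℝ) :
    ⟪greatCircle e v φ, greatCircle e v ψ⟫ = cos (φ - ψ) := by
  have hve : ⟪v, e⟫ = 0 := by rw [real_inner_comm, hev]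
  simp only [greatCircle, inner_add_left, inner_add_right, real_inner_smul_left,
    real_inner_smul_right, real_inner_self_eq_norm_sq, he, hv, hev, hve, cos_sub]
  ring

lemma norm_greatCircle (θ : ℝ) : ‖greatCircle e v θ‖ = 1 := by
  have h := inner_greatCircle he hv hev θ θ
  rw [sub_self, cos_zero, real_inner_self_eq_norm_sq] at h
  exact (pow_eq_one_iff_of_nonneg (norm_nonneg _) two_ne_zero).1 h

lemma mem_arc_greatCircle {θ : ℝ} (hθ : 0 ≤ θ) (hθ' : θ ≤ π / 2) :
    e ∈ Arc (greatCircle e v θ) (greatCircle e v (-θ)) := by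
  suffices h : greatCircle e v 0 ∈ Arc (greatCircle e v θ) (greatCircle e v (-θ)) by
    rwa [greatCircle_zero] at h
  refine ⟨norm_greatCircle he hv hev 0, ?_⟩
  simp only [sdist, inner_greatCircle he hv hev, sub_zero, sub_neg_eq_add, zero_add]
  rw [arccos_cos hθ (by linarith), arccos_cos (by linarith) (by linarith)]

lemma not_extremeP_of_greatCircle_mem {C : Set (Esp n)} {θ : ℝ} (hθ : 0 < θ) (hθ' : θ ≤ π / 2)
    (h₁ : greatCircle e v θ ∈ C) (h₂ : greatCircle e v (-θ) ∈ C) : ¬ ExtremeP C e := by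
  intro hext
  have hcos : cos θ ≠ 1 := fun h => by
    have := arccos_cos hθ.le (by linarith)
    rw [h, arccos_one] at this
    exact hθ.ne this
  have hself : ∀ φ, greatCircle e v φ = e → cos φ = 1 := fun φ h => by
    have := inner_greatCircle he hv hev φ 0
    rwa [greatCircle_zero, h, real_inner_self_eq_norm_sq, he, one_pow, sub_zero, eq_comm] at this
  rcases hext.2 _ h₁ _ h₂ (mem_arc_greatCircle he hv hev hθ.le hθ') with h | h
  · exact hcos (hself θ h.symm)
  · exact hcos (cos_neg θ ▸ hself (-θ) h.symm)

lemma eventually_greatCircle_mem_hemi {m : Esp n}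
    (hm : (⟪m, v⟫ = 0 ∧ 0 ≤ ⟪m, e⟫) ∨ 0 < ⟪m, e⟫) :
    ∀ᶠ θ in 𝓝 0, greatCircle e v θ ∈ Hemi m := by
  have hinner : ∀ θ, ⟪m, greatCircle e v θ⟫ = cos θ * ⟪m, e⟫ + sin θ * ⟪m, v⟫ := fun θ => by
    simp only [greatCircle, inner_add_right, real_inner_smul_right]
  simp only [Hemi, uSphere, Set.mem_ofPred_eq, norm_greatCircle he hv hev, true_and, hinner]
  rcases hm with ⟨hmv, hme⟩ | hme
  · filter_upwards [continuousAt_const.eventually_lt continuous_cos.continuousAt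
      (by simp : (0 : ℝ) < cos 0)] with θ hθ
    rw [hmv, mul_zero, add_zero]
    exact mul_nonneg hθ.le hme
  · filter_upwards [continuousAt_const.eventually_lt
      (by fun_prop : ContinuousAt (fun θ => cos θ * ⟪m, e⟫ + sin θ * ⟪m, v⟫) 0)
      (by simpa using hme)] with θ hθ using hθ.le

end GreatCircle

section ExtremePoints

variable {n : ℕ} {ι : Type*} {g : ι → Esp n}

lemma exists_norm_eq_one_inner_eq_zero_pair (hn : 3 ≤ n) (e w : Esp n) :
    ∃ v : Esp n, ‖v‖ = 1 ∧ ⟪e, v⟫ = 0 ∧ ⟪w, v⟫ = 0 := by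
  set K := Submodule.span ℝ ({e, w} : Set (Esp n))
  have hK : Kᗮ ≠ ⊥ := by
    rw [Ne, Submodule.orthogonal_eq_bot_iff]
    intro hK
    have h2 : Module.finrank ℝ K ≤ 2 := by
      classical
      have h := (finrank_span_finset_le_card (R := ℝ) ({e, w} : Finset (Esp n))).trans
        Finset.card_le_two
      rwa [Finset.coe_pair] at h
    rw [hK, finrank_top, finrank_euclideanSpace_fin] at h2
    omega
  obtain ⟨u, hu, hu0⟩ := Submodule.exists_mem_ne_zero_of_ne_bot hK
  have horth : ∀ x ∈ ({e, w} : Set (Esp n)), ⟪x, u⟫ = 0 := fun x hx =>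
    Submodule.inner_right_of_mem_orthogonal (Submodule.subset_span hx) hu
  refine ⟨‖u‖⁻¹ • u, by simp [norm_smul, hu0], ?_, ?_⟩ <;>
    simp [real_inner_smul_right, horth]

lemma ExtremeP.exists_ne_inner_eq_zero (hn : 3 ≤ n) [Finite ι] [Nonempty ι] {e : Esp n}
    (h : ExtremeP (⋂ i, Hemi (g i)) e) : ∃ i j, i ≠ j ∧ ⟪g i, e⟫ = 0 ∧ ⟪g j, e⟫ = 0 := by
  by_contra! hne
  have he := Set.mem_iInter.1 h.1
  have he1 : ‖e‖ = 1 := (he (Classical.arbitrary ι)).1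
  -- `w` is the normal of the only bounding great circle through `e`, if there is one.
  obtain ⟨w, hw⟩ : ∃ w, ∀ i, ⟪g i, e⟫ = 0 → g i = w := by
    by_cases h0 : ∃ i, ⟪g i, e⟫ = 0
    · obtain ⟨i₀, hi₀⟩ := h0
      refine ⟨g i₀, fun i hi => ?_⟩
      by_contra hgi
      exact hne i i₀ (fun hii => hgi (hii ▸ rfl)) hi hi₀
    · exact ⟨0, fun i hi => (h0 ⟨i, hi⟩).elim⟩
  obtain ⟨v, hv, hev, hwv⟩ := exists_norm_eq_one_inner_eq_zero_pair hn e w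
  have hmem : ∀ᶠ θ in 𝓝 0, greatCircle e v θ ∈ ⋂ i, Hemi (g i) := by
    simp only [Set.mem_iInter]
    refine eventually_all.2 fun i => eventually_greatCircle_mem_hemi he1 hv hev ?_
    by_cases hi : ⟪g i, e⟫ = 0
    · exact Or.inl ⟨by rw [hw i hi, hwv], (he i).2⟩
    · exact Or.inr ((he i).2.lt_of_ne' hi)
  have hmem' : ∀ᶠ θ in 𝓝 0, greatCircle e v (-θ) ∈ ⋂ i, Hemi (g i) :=
    (neg_zero (G := ℝ) ▸ tendsto_neg (0 : ℝ)).eventually hmem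
  obtain ⟨θ, ⟨h₁, h₂⟩, hθ⟩ := ((hmem.and hmem').filter_mono nhdsWithin_le_nhds |>.and
    (Ioo_mem_nhdsGT (by positivity : (0 : ℝ) < π / 2))).exists
  exact not_extremeP_of_greatCircle_mem he1 hv hev hθ.1 hθ.2.le h₁ h₂ h

end ExtremePoints

section ThicknessDiameter

variable {n : ℕ}

lemma norm_sub_inner_smul_sq {x y : Esp n} (hx : ‖x‖ = 1) (hy : ‖y‖ = 1) :
    ‖y - ⟪x, y⟫ • x‖ ^ 2 = 1 - ⟪x, y⟫ ^ 2 := by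
  rw [norm_sub_sq_real, real_inner_smul_right, norm_smul, hx, hy, Real.norm_eq_abs, mul_one,
    sq_abs, real_inner_comm x y]
  ring

lemma lthick_eq_arccos_neg_inner {g h : Esp n} (hgh : IsLune g h) :
    lthick g h = arccos (-⟪g, h⟫) := by
  obtain ⟨hg : ‖g‖ = 1, hh : ‖h‖ = 1, hne, hne'⟩ := hgh
  have hlt : ⟪g, h⟫ ^ 2 < 1 := by
    have habs : |⟪g, h⟫| ≤ 1 := by simpa [hg, hh] using abs_real_inner_le_norm g h
    have h1 : ⟪g, h⟫ ≠ 1 := fun h1 => hne ((inner_eq_one_iff_of_norm_eq_one hg hh).1 h1)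
    have h2 : ⟪g, h⟫ ≠ -1 := fun h2 => hne' ((inner_eq_neg_one_iff_of_norm_eq_one hg hh).1 h2)
    rw [sq_lt_one_iff_abs_lt_one]
    exact habs.lt_of_ne fun h3 => ((abs_eq zero_le_one).1 h3).elim h1 h2
  have hu := norm_sub_inner_smul_sq hg hh
  have hw := norm_sub_inner_smul_sq hh hg
  rw [real_inner_comm] at hw
  have hnorm : ‖g - ⟪g, h⟫ • h‖ = ‖h - ⟪g, h⟫ • g‖ :=
    (sq_eq_sq₀ (norm_nonneg _) (norm_nonneg _)).1 (hw.trans hu.symm)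
  have hpos : 0 < ‖h - ⟪g, h⟫ • g‖ := by
    refine (norm_nonneg _).lt_of_ne fun h0 => ?_
    rw [← h0] at hu
    linarith
  have hinner : ⟪h - ⟪g, h⟫ • g, g - ⟪g, h⟫ • h⟫ = -⟪g, h⟫ * ‖h - ⟪g, h⟫ • g‖ ^ 2 := by
    rw [hu]
    simp only [inner_sub_left, inner_sub_right, real_inner_smul_left, real_inner_smul_right,
      real_inner_self_eq_norm_sq, hg, hh, real_inner_comm g h]
    ring
  unfold lthick sdist scCenter
  rw [real_inner_comm g h, real_inner_smul_left, real_inner_smul_right, hinner, hnorm]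
  congr 1
  field_simp

lemma thick_le_lthick {C : Set (Esp n)} {g h : Esp n} (hgh : IsLune g h) (hC : C ⊆ Lune g h) :
    thick C ≤ lthick g h :=
  csInf_le ⟨0, by rintro t ⟨g, h, -, -, rfl⟩; exact arccos_nonneg _⟩ ⟨g, h, hgh, hC, rfl⟩

lemma sdist_le_sdiam {C : Set (Esp n)} {a b : Esp n} (ha : a ∈ C) (hb : b ∈ C) :
    sdist a b ≤ sdiam C :=
  le_csSup ⟨π, by rintro t ⟨a, -, b, -, rfl⟩; exact arccos_le_pi _⟩ ⟨a, ha, b, hb, rfl⟩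

lemma sdiam_le_arccos {C : Set (Esp n)} {c : ℝ} (h : ∀ a ∈ C, ∀ b ∈ C, c ≤ ⟪a, b⟫) :
    sdiam C ≤ arccos c :=
  Real.sSup_le (by rintro t ⟨a, ha, b, hb, rfl⟩; exact arccos_le_arccos (h a ha b hb))
    (arccos_nonneg c)

end ThicknessDiameter

section Triangle

lemma inner_vec3 (a b c : ℝ) (x : Esp 3) : ⟪!₂[a, b, c], x⟫ = a * x 0 + b * x 1 + c * x 2 := by
  simp [PiLp.inner_apply, Fin.sum_univ_three]
  ring

lemma norm_eq_one_iff_vec3 (x : Esp 3) : ‖x‖ = 1 ↔ x 0 ^ 2 + x 1 ^ 2 + x 2 ^ 2 = 1 := by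
  rw [EuclideanSpace.norm_eq, Real.sqrt_eq_one, Fin.sum_univ_three]
  simp

lemma eq_vec3 {x : Esp 3} {a b c : ℝ} (h0 : x 0 = a) (h1 : x 1 = b) (h2 : x 2 = c) :
    x = !₂[a, b, c] := by
  ext i; fin_cases i <;> simp [h0, h1, h2]

-- Centres of hemispheres need not be unit vectors; only the two arm normals, which also bound
-- the lune, are normalized.
noncomputable def triangleNormal : Fin 3 → Esp 3 :=
  ![!₂[3 / 5, -4 / 5, 0], !₂[3 / 5, 4 / 5, 0], !₂[15, 0, 16]]

def triangle : Set (Esp 3) := ⋂ i, Hemi (triangleNormal i)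

noncomputable def apex : Esp 3 := !₂[0, 0, 1]
noncomputable def baseVertex₁ : Esp 3 := !₂[16 / 25, 12 / 25, -3 / 5]
noncomputable def baseVertex₂ : Esp 3 := !₂[16 / 25, -12 / 25, -3 / 5]
noncomputable def farPoint : Esp 3 := !₂[351 / 449, 0, -280 / 449]

lemma inner_triangleNormal (x : Esp 3) :
    ⟪triangleNormal 0, x⟫ = (3 * x 0 - 4 * x 1) / 5 ∧
    ⟪triangleNormal 1, x⟫ = (3 * x 0 + 4 * x 1) / 5 ∧
    ⟪triangleNormal 2, x⟫ = 15 * x 0 + 16 * x 2 := by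
  simp [triangleNormal, inner_vec3]
  exact ⟨by ring, by ring⟩

lemma mem_triangle_iff {x : Esp 3} : x ∈ triangle ↔ ‖x‖ = 1 ∧
    0 ≤ 3 * x 0 - 4 * x 1 ∧ 0 ≤ 3 * x 0 + 4 * x 1 ∧ 0 ≤ 15 * x 0 + 16 * x 2 := by
  obtain ⟨h₀, h₁, h₂⟩ := inner_triangleNormal x
  simp only [triangle, Set.mem_iInter, Fin.forall_fin_succ, Hemi, uSphere, Set.mem_ofPred_eq]
  simp only [Fin.succ_zero_eq_one, Fin.succ_one_eq_two, h₀, h₁, h₂, IsEmpty.forall_iff, and_true]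
  constructor
  · rintro ⟨⟨hx, h₀⟩, ⟨-, h₁⟩, -, h₂⟩
    exact ⟨hx, by linarith, by linarith, h₂⟩
  · rintro ⟨hx, h₀, h₁, h₂⟩
    exact ⟨⟨hx, by linarith⟩, ⟨hx, by linarith⟩, hx, h₂⟩

lemma eq_zero_of_inner_triangleNormal_eq_zero (x : Esp 3) (hx : ∀ i, ⟪triangleNormal i, x⟫ = 0) : x = 0 := by
  obtain ⟨h₀, h₁, h₂⟩ := inner_triangleNormal x
  rw [hx] at h₀ h₁ h₂
  ext i; fin_cases i <;> simp <;> linarith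

lemma sphBody_triangle : SphBody triangle := by
  refine sphBody_iInter_hemi eq_zero_of_inner_triangleNormal_eq_zero (x := !₂[3 / 5, 0, 4 / 5])
    (by rw [norm_eq_one_iff_vec3]; norm_num [Matrix.cons_val_two]) fun i => ?_
  fin_cases i <;> norm_num [triangleNormal, inner_vec3, Matrix.cons_val_two]

lemma apex_mem_triangle : apex ∈ triangle := by
  rw [mem_triangle_iff, norm_eq_one_iff_vec3]; simp [apex]

lemma farPoint_mem_triangle : farPoint ∈ triangle := by
  rw [mem_triangle_iff, norm_eq_one_iff_vec3]; norm_num [farPoint, Matrix.cons_val_two]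

lemma eq_apex {e : Esp 3} (he : e ∈ triangle) (h₀ : ⟪triangleNormal 0, e⟫ = 0)
    (h₁ : ⟪triangleNormal 1, e⟫ = 0) : e = apex := by
  obtain ⟨hn, -, -, h₂⟩ := mem_triangle_iff.1 he
  rw [norm_eq_one_iff_vec3] at hn
  rw [(inner_triangleNormal e).1] at h₀
  rw [(inner_triangleNormal e).2.1] at h₁
  have e0 : e 0 = 0 := by linarith
  have e1 : e 1 = 0 := by linarith
  exact eq_vec3 e0 e1 (by nlinarith)

lemma eq_baseVertex₁ {e : Esp 3} (he : e ∈ triangle) (h₀ : ⟪triangleNormal 0, e⟫ = 0)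
    (h₂ : ⟪triangleNormal 2, e⟫ = 0) : e = baseVertex₁ := by
  obtain ⟨hn, -, h₁, -⟩ := mem_triangle_iff.1 he
  rw [norm_eq_one_iff_vec3] at hn
  rw [(inner_triangleNormal e).1] at h₀
  rw [(inner_triangleNormal e).2.2] at h₂
  have e0 : e 0 = 16 / 25 := by nlinarith
  exact eq_vec3 e0 (by linarith) (by linarith)

lemma eq_baseVertex₂ {e : Esp 3} (he : e ∈ triangle) (h₁ : ⟪triangleNormal 1, e⟫ = 0)
    (h₂ : ⟪triangleNormal 2, e⟫ = 0) : e = baseVertex₂ := by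
  obtain ⟨hn, h₀, -, -⟩ := mem_triangle_iff.1 he
  rw [norm_eq_one_iff_vec3] at hn
  rw [(inner_triangleNormal e).2.1] at h₁
  rw [(inner_triangleNormal e).2.2] at h₂
  have e0 : e 0 = 16 / 25 := by nlinarith
  exact eq_vec3 e0 (by linarith) (by linarith)

lemma ExtremeP.eq_vertex_of_triangle {e : Esp 3} (h : ExtremeP triangle e) :
    e = apex ∨ e = baseVertex₁ ∨ e = baseVertex₂ := by
  obtain ⟨i, j, hij, hi, hj⟩ := h.exists_ne_inner_eq_zero le_rfl
  fin_cases i <;> fin_cases j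
  all_goals first
    | exact absurd rfl hij
    | exact Or.inl (eq_apex h.1 hi hj) | exact Or.inl (eq_apex h.1 hj hi)
    | exact Or.inr (Or.inl (eq_baseVertex₁ h.1 hi hj))
    | exact Or.inr (Or.inl (eq_baseVertex₁ h.1 hj hi))
    | exact Or.inr (Or.inr (eq_baseVertex₂ h.1 hi hj))
    | exact Or.inr (Or.inr (eq_baseVertex₂ h.1 hj hi))

lemma inner_extremeP_triangle_ge {a b : Esp 3} (ha : ExtremeP triangle a)
    (hb : ExtremeP triangle b) : -3 / 5 ≤ ⟪a, b⟫ := by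
  rcases ha.eq_vertex_of_triangle with rfl | rfl | rfl <;>
  rcases hb.eq_vertex_of_triangle with rfl | rfl | rfl <;>
  simp only [apex, baseVertex₁, baseVertex₂, inner_vec3] <;>
  norm_num [Matrix.cons_val_two]

lemma isLune_triangleNormal : IsLune (triangleNormal 0) (triangleNormal 1) := by
  refine ⟨?_, ?_, fun h => ?_, fun h => ?_⟩
  · simp [uSphere, triangleNormal, norm_eq_one_iff_vec3]; norm_num
  · simp [uSphere, triangleNormal, norm_eq_one_iff_vec3]; norm_num
  · have := congrArg (· 1) h; simp [triangleNormal] at this; norm_num at this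
  · have := congrArg (· 0) h; simp [triangleNormal] at this; norm_num at this

lemma thick_triangle_le : thick triangle ≤ π / 2 := by
  have hsub : triangle ⊆ Lune (triangleNormal 0) (triangleNormal 1) := fun x hx =>
    ⟨Set.mem_iInter.1 hx 0, Set.mem_iInter.1 hx 1⟩
  calc thick triangle ≤ lthick (triangleNormal 0) (triangleNormal 1) :=
        thick_le_lthick isLune_triangleNormal hsub
    _ = arccos (7 / 25) := by
        rw [lthick_eq_arccos_neg_inner isLune_triangleNormal, (inner_triangleNormal _).1]
        simp [triangleNormal]; norm_num
    _ ≤ π / 2 := arccos_le_pi_div_two.2 (by norm_num)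

end Triangle

/-- There exists a spherical convex body C ⊂ S² whose thickness is at most π/2
but whose set of extreme points has diameter strictly smaller than diam C. -/
theorem stmt_6 :
    ∃ C : Set (Esp 3), SphBody C ∧ thick C ≤ Real.pi / 2 ∧
      sdiam {e | ExtremeP C e} < sdiam C := by
  refine ⟨triangle, sphBody_triangle, thick_triangle_le, ?_⟩
  calc sdiam {e | ExtremeP triangle e} ≤ arccos (-3 / 5) :=
        sdiam_le_arccos fun a ha b hb => inner_extremeP_triangle_ge ha hb
    _ < arccos (-280 / 449) := arccos_lt_arccos (by norm_num) (by norm_num) (by norm_num)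
    _ = sdist apex farPoint := by
        norm_num [sdist, apex, farPoint, inner_vec3, Matrix.cons_val_two]
    _ ≤ sdiam triangle := sdist_le_sdiam apex_mem_triangle farPoint_mem_triangle
end

section
/- Let L = G ∩ H be a lune on S^2 with thickness greater than π/2, where G and H are hemispheres. Let p be the center of the semicircle G/H and s the center of the semicircle H/G. Then for every point x on the semicircle H/G with x ≠ s, one has |px| < |ps|; consequently, |pz| ≤ |ps| = Δ(L) for every z ∈ L. -/
/-! With `t = ⟪g, h⟫` and `r = √(1 - t²)` the two centres are `p = (h - t g) / r` and
`s = (g - t h) / r`, so `⟪p, s⟫ = -t`, `Δ(L) = arccos (-t)`, and `Δ(L) > π/2` means `t > 0`.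
A point `x` of `H/G` satisfies `⟪p, x⟫ = -t ⟪s, x⟫ > -t` unless `x = s`. A point `z` of the lune
has `a = ⟪g, z⟫ ≥ 0`, and `b = ⟪p, z⟫` satisfies `a² + b² ≤ 1` (as `g ⊥ p`) and
`0 ≤ ⟪h, z⟫ = t a + r b`; together these force `b ≥ -t`. -/

open Real RealInnerProductSpace

section InnerProductSpace

variable {E : Type*} [NormedAddCommGroup E] [InnerProductSpace ℝ E]

theorem inner_sq_add_inner_sq_le_norm_sq {u v : E} (hu : ‖u‖ = 1) (hv : ‖v‖ = 1)
    (huv : ⟪u, v⟫ = 0) (z : E) : ⟪u, z⟫ ^ 2 + ⟪v, z⟫ ^ 2 ≤ ‖z‖ ^ 2 := by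
  have h := real_inner_self_nonneg (x := z - ⟪u, z⟫ • u - ⟪v, z⟫ • v)
  simp only [inner_sub_left, inner_sub_right, real_inner_smul_left, real_inner_smul_right,
    inner_self_eq_one_of_norm_eq_one hu, inner_self_eq_one_of_norm_eq_one hv, huv,
    real_inner_comm u z, real_inner_comm v z, real_inner_comm u v] at h
  rw [← real_inner_self_eq_norm_sq]
  nlinarith

theorem norm_sub_inner_smul_sq_s7 {g h : E} (hg : ‖g‖ = 1) (hh : ‖h‖ = 1) :
    ‖h - ⟪g, h⟫ • g‖ ^ 2 = 1 - ⟪g, h⟫ ^ 2 := by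
  rw [← real_inner_self_eq_norm_sq]
  simp only [inner_sub_left, inner_sub_right, real_inner_smul_left, real_inner_smul_right,
    inner_self_eq_one_of_norm_eq_one hg, inner_self_eq_one_of_norm_eq_one hh, real_inner_comm g h]
  ring

end InnerProductSpace

theorem neg_le_of_sq_add_sq_le_one_of_mul_add_mul_nonneg {a b t r : ℝ} (ht : 0 < t) (hr : 0 < r)
    (htr : t ^ 2 + r ^ 2 = 1) (ha : 0 ≤ a) (hab : a ^ 2 + b ^ 2 ≤ 1) (h : 0 ≤ t * a + r * b) :
    -t ≤ b := by
  by_contra! hb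
  have hbt : t ^ 2 < b ^ 2 := by nlinarith
  have har : a < r := by nlinarith
  nlinarith

namespace IsLune

variable {n : ℕ} {g h : Esp n}

theorem norm_left (hl : IsLune g h) : ‖g‖ = 1 := hl.1

theorem norm_right (hl : IsLune g h) : ‖h‖ = 1 := hl.2.1

theorem symm (hl : IsLune g h) : IsLune h g :=
  ⟨hl.2.1, hl.1, hl.2.2.1.symm, fun e => hl.2.2.2 (by rw [e, neg_neg])⟩

theorem abs_inner_lt_one (hl : IsLune g h) : |⟪g, h⟫| < 1 := by
  have hnh : ‖-h‖ = 1 := by rw [norm_neg, hl.norm_right]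
  have h₁ := (inner_lt_one_iff_real_of_norm_eq_one hl.norm_left hl.norm_right).2 hl.2.2.1
  have h₂ := (inner_lt_one_iff_real_of_norm_eq_one hl.norm_left hnh).2 hl.2.2.2
  rw [inner_neg_right] at h₂
  exact abs_lt.2 ⟨by linarith, h₁⟩

theorem norm_sub_inner_smul (hl : IsLune g h) :
    ‖h - ⟪g, h⟫ • g‖ = √(1 - ⟪g, h⟫ ^ 2) := by
  rw [← norm_sub_inner_smul_sq_s7 hl.norm_left hl.norm_right, sqrt_sq (norm_nonneg _)]

theorem one_sub_inner_sq_pos (hl : IsLune g h) : 0 < 1 - ⟪g, h⟫ ^ 2 :=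
  sub_pos.2 ((sq_lt_one_iff_abs_lt_one _).2 hl.abs_inner_lt_one)

theorem sqrt_one_sub_inner_sq_pos (hl : IsLune g h) : 0 < √(1 - ⟪g, h⟫ ^ 2) :=
  sqrt_pos.2 hl.one_sub_inner_sq_pos

theorem inner_scCenter (hl : IsLune g h) (x : Esp n) :
    ⟪scCenter g h, x⟫ = (⟪h, x⟫ - ⟪g, h⟫ * ⟪g, x⟫) / √(1 - ⟪g, h⟫ ^ 2) := by
  rw [scCenter, hl.norm_sub_inner_smul, real_inner_smul_left, inner_sub_left,
    real_inner_smul_left, inv_mul_eq_div]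

theorem norm_scCenter (hl : IsLune g h) : ‖scCenter g h‖ = 1 := by
  rw [scCenter, norm_smul, norm_inv, norm_norm,
    inv_mul_cancel₀ (hl.norm_sub_inner_smul ▸ hl.sqrt_one_sub_inner_sq_pos).ne']

theorem inner_left_scCenter (hl : IsLune g h) : ⟪g, scCenter g h⟫ = 0 := by
  rw [real_inner_comm, hl.inner_scCenter, real_inner_comm g h,
    inner_self_eq_one_of_norm_eq_one hl.norm_left]
  ring

theorem inner_scCenter_scCenter (hl : IsLune g h) :
    ⟪scCenter g h, scCenter h g⟫ = -⟪g, h⟫ := by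
  have hr := hl.sqrt_one_sub_inner_sq_pos
  have hgs : ⟪g, scCenter h g⟫ = √(1 - ⟪g, h⟫ ^ 2) := by
    rw [real_inner_comm, hl.symm.inner_scCenter, real_inner_comm g h,
      inner_self_eq_one_of_norm_eq_one hl.norm_left, ← sq, div_eq_iff hr.ne',
      ← sq, sq_sqrt hl.one_sub_inner_sq_pos.le]
  rw [hl.inner_scCenter, hl.symm.inner_left_scCenter, hgs, zero_sub, neg_div,
    mul_div_cancel_right₀ _ hr.ne']

theorem lthick_eq_arccos (hl : IsLune g h) : lthick g h = arccos (-⟪g, h⟫) := by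
  rw [lthick, sdist, hl.inner_scCenter_scCenter]

theorem inner_pos_of_pi_div_two_lt_lthick (hl : IsLune g h) (ht : π / 2 < lthick g h) :
    0 < ⟪g, h⟫ := by
  rw [hl.lthick_eq_arccos, ← not_le, arccos_le_pi_div_two] at ht
  linarith

theorem sdist_scCenter_lt_lthick (hl : IsLune g h) (ht : 0 < ⟪g, h⟫) {x : Esp n}
    (hx : x ∈ semic h g) (hxs : x ≠ scCenter h g) : sdist (scCenter g h) x < lthick g h := by
  obtain ⟨hx₁, hhx, -⟩ := hx
  have hsx : ⟪scCenter h g, x⟫ < 1 :=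
    (inner_lt_one_iff_real_of_norm_eq_one hl.symm.norm_scCenter hx₁).2 hxs.symm
  have hpx : ⟪scCenter g h, x⟫ = -⟪g, h⟫ * ⟪scCenter h g, x⟫ := by
    rw [hl.inner_scCenter, hl.symm.inner_scCenter, hhx, real_inner_comm g h]
    ring
  rw [hl.lthick_eq_arccos, sdist]
  apply arccos_lt_arccos (by linarith [hl.abs_inner_lt_one, le_abs_self ⟪g, h⟫]) _
    (real_inner_le_one_of_norm_eq_one hl.norm_scCenter hx₁)
  rw [hpx]
  nlinarith

theorem sdist_scCenter_le_lthick (hl : IsLune g h) (ht : 0 < ⟪g, h⟫) {z : Esp n}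
    (hz : z ∈ Lune g h) : sdist (scCenter g h) z ≤ lthick g h := by
  obtain ⟨⟨hz₁, hgz⟩, -, hhz⟩ := hz
  have hr := hl.sqrt_one_sub_inner_sq_pos
  have hbessel := inner_sq_add_inner_sq_le_norm_sq hl.norm_left hl.norm_scCenter
    hl.inner_left_scCenter z
  have hhz' : ⟪h, z⟫ = ⟪g, h⟫ * ⟪g, z⟫ + √(1 - ⟪g, h⟫ ^ 2) * ⟪scCenter g h, z⟫ := by
    rw [hl.inner_scCenter, mul_div_cancel₀ _ hr.ne']
    ring
  rw [hl.lthick_eq_arccos, sdist]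
  refine arccos_le_arccos
    (neg_le_of_sq_add_sq_le_one_of_mul_add_mul_nonneg ht hr ?_ hgz ?_ (hhz' ▸ hhz))
  · rw [sq_sqrt hl.one_sub_inner_sq_pos.le]
    ring
  · rwa [hz₁, one_pow] at hbessel

end IsLune

/-- For a lune L = G ∩ H of thickness greater than π/2, with p the center of
G/H and s the center of H/G: |px| < |ps| for every x ≠ s on the semicircle
H/G, and consequently |pz| ≤ |ps| = Δ(L) for every z ∈ L. -/
theorem stmt_7 (g h : Esp 3) (hl : IsLune g h) (ht : Real.pi / 2 < lthick g h) :
    (∀ x ∈ semic h g, x ≠ scCenter h g →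
        sdist (scCenter g h) x < sdist (scCenter g h) (scCenter h g)) ∧
    (∀ z ∈ Lune g h, sdist (scCenter g h) z ≤ sdist (scCenter g h) (scCenter h g)) ∧
    sdist (scCenter g h) (scCenter h g) = lthick g h := by
  have ht₀ := hl.inner_pos_of_pi_div_two_lt_lthick ht
  exact ⟨fun x hx hxs => hl.sdist_scCenter_lt_lthick ht₀ hx hxs,
    fun z hz => hl.sdist_scCenter_le_lthick ht₀ hz, rfl⟩
end
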